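/- arXiv:1601.03435 — 4 statements merged into one kernel-verified Lean document; each statement's English description precedes it below -/
import Mathlib

section
/- Let ρ, λ, ν > 0 with λ > νρ, let δ > 0, and let r < 0 < s be the two real roots of ρξ² + (λ+δ-νρ)ξ - νδ = 0. Define b(δ) = (1/(r-s)) · log( (s/r) · (ρs+δ)/(ρr+δ) ), assuming ρr + δ < 0. Then b(δ) → ∞ as δ → 0⁺. -/
/-!
As `δ → 0⁺` the negative root `r` tends to `-(λ - νρ)/ρ < 0` and the positive root `s` tends to `0`,
so `ρ r + δ` stays negative and the argument `(s/r) (ρs + δ)/(ρr + δ)` of the logarithm is a product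
of two negative factors tending to `0`. Its logarithm therefore tends to `-∞`, while the prefactor
`1/(r - s)` tends to the negative constant `1/r(0⁺)`, so `b(δ) → +∞`.
-/

open Filter Topology

lemma neg_add_sqrt_sq_add_pos {B C : ℝ} (hC : 0 < C) : 0 < -B + √(B ^ 2 + C) := by
  have hB : |B| < √(B ^ 2 + C) := (Real.lt_sqrt (abs_nonneg B)).2 (by rw [sq_abs]; linarith)
  linarith [le_abs_self B]

section Barrier

variable {ρ r₀ : ℝ} {r s : ℝ → ℝ}

lemma tendsto_barrier_arg_nhdsGT_zero (hρ : 0 < ρ) (hr₀ : r₀ < 0)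
    (hr : Tendsto r (𝓝[>] 0) (𝓝 r₀)) (hs : Tendsto s (𝓝[>] 0) (𝓝 0))
    (hs_pos : ∀ᶠ δ in 𝓝[>] 0, 0 < s δ) :
    Tendsto (fun δ => s δ / r δ * ((ρ * s δ + δ) / (ρ * r δ + δ))) (𝓝[>] 0) (𝓝[>] 0) := by
  have hδ : Tendsto (fun δ : ℝ => δ) (𝓝[>] 0) (𝓝 0) := nhdsWithin_le_nhds
  have hden : Tendsto (fun δ => ρ * r δ + δ) (𝓝[>] 0) (𝓝 (ρ * r₀)) := by
    simpa using (hr.const_mul ρ).add hδ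
  have hρr₀ : ρ * r₀ < 0 := mul_neg_of_pos_of_neg hρ hr₀
  have hlim : Tendsto (fun δ => s δ / r δ * ((ρ * s δ + δ) / (ρ * r δ + δ))) (𝓝[>] 0) (𝓝 0) := by
    simpa using (hs.div hr hr₀.ne).mul (((hs.const_mul ρ).add hδ).div hden hρr₀.ne)
  refine tendsto_nhdsWithin_of_tendsto_nhds_of_eventually_within _ hlim ?_
  filter_upwards [hs_pos, hr.eventually_lt_const hr₀, hden.eventually_lt_const hρr₀,
    self_mem_nhdsWithin] with δ hsδ hrδ hdenδ (hδpos : 0 < δ)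
  exact mul_pos_of_neg_of_neg (div_neg_of_pos_of_neg hsδ hrδ)
    (div_neg_of_pos_of_neg (by positivity) hdenδ)

lemma tendsto_barrier_atTop (hρ : 0 < ρ) (hr₀ : r₀ < 0)
    (hr : Tendsto r (𝓝[>] 0) (𝓝 r₀)) (hs : Tendsto s (𝓝[>] 0) (𝓝 0))
    (hs_pos : ∀ᶠ δ in 𝓝[>] 0, 0 < s δ) :
    Tendsto (fun δ => 1 / (r δ - s δ) * Real.log (s δ / r δ * ((ρ * s δ + δ) / (ρ * r δ + δ))))
      (𝓝[>] 0) atTop := by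
  have hpre : Tendsto (fun δ => 1 / (r δ - s δ)) (𝓝[>] 0) (𝓝 (1 / r₀)) := by
    simpa [one_div] using (hr.sub hs).inv₀ (by simpa using hr₀.ne)
  exact hpre.neg_mul_atBot (one_div_neg.2 hr₀) <|
    Real.tendsto_log_nhdsGT_zero.comp (tendsto_barrier_arg_nhdsGT_zero hρ hr₀ hr hs hs_pos)

end Barrier

theorem stmt_8_general (ρ lam ν : ℝ) (hρ : 0 < ρ) (hν : 0 < ν)
    (h : ν * ρ < lam)
    (r s b : ℝ → ℝ)
    (hr : ∀ δ : ℝ, r δ =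
      (-(lam + δ - ν * ρ) - Real.sqrt ((lam + δ - ν * ρ)^2 + 4 * ρ * ν * δ)) / (2 * ρ))
    (hs : ∀ δ : ℝ, s δ =
      (-(lam + δ - ν * ρ) + Real.sqrt ((lam + δ - ν * ρ)^2 + 4 * ρ * ν * δ)) / (2 * ρ))
    (hb : ∀ δ : ℝ, b δ =
      (1 / (r δ - s δ)) * Real.log ((s δ / r δ) * ((ρ * s δ + δ) / (ρ * r δ + δ)))) :
    Tendsto b (𝓝[>] 0) atTop := by
  have hc : 0 < lam - ν * ρ := sub_pos.2 h
  have hsqrt : √((lam + 0 - ν * ρ) ^ 2 + 4 * ρ * ν * 0) = lam - ν * ρ := by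
    simpa using Real.sqrt_sq hc.le
  have hr_lim : Tendsto r (𝓝[>] 0) (𝓝 (-((lam - ν * ρ) / ρ))) := by
    refine (Continuous.tendsto' (by rw [funext hr]; fun_prop) 0 _ ?_).mono_left nhdsWithin_le_nhds
    rw [hr, hsqrt]
    field_simp
    ring
  have hs_lim : Tendsto s (𝓝[>] 0) (𝓝 0) := by
    refine (Continuous.tendsto' (by rw [funext hs]; fun_prop) 0 _ ?_).mono_left nhdsWithin_le_nhds
    rw [hs, hsqrt]
    ring
  have hs_pos : ∀ᶠ δ in 𝓝[>] 0, 0 < s δ := eventually_nhdsWithin_of_forall fun δ (hδ : 0 < δ) => by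
    rw [hs]
    exact div_pos (neg_add_sqrt_sq_add_pos (by positivity)) (by positivity)
  rw [funext hb]
  exact tendsto_barrier_atTop hρ (neg_neg_of_pos (div_pos hc hρ)) hr_lim hs_lim hs_pos

theorem stmt_8 (ρ lam ν : ℝ) (hρ : 0 < ρ) (hlam : 0 < lam) (hν : 0 < ν)
    (h : ν * ρ < lam)
    (r s b : ℝ → ℝ)
    (hr : ∀ δ : ℝ, r δ =
      (-(lam + δ - ν * ρ) - Real.sqrt ((lam + δ - ν * ρ)^2 + 4 * ρ * ν * δ)) / (2 * ρ))
    (hs : ∀ δ : ℝ, s δ =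
      (-(lam + δ - ν * ρ) + Real.sqrt ((lam + δ - ν * ρ)^2 + 4 * ρ * ν * δ)) / (2 * ρ))
    (hb : ∀ δ : ℝ, b δ =
      (1 / (r δ - s δ)) * Real.log ((s δ / r δ) * ((ρ * s δ + δ) / (ρ * r δ + δ)))) :
    Tendsto b (𝓝[>] 0) atTop :=
  stmt_8_general ρ lam ν hρ hν h r s b hr hs hb
end

section
/- Let ρ, λ, ν > 0. Let r(δ), s(δ) be the roots of ρξ² + (λ+δ-νρ)ξ - νδ = 0 and b(δ) = (1/(r-s)) log( (s/r)(ρs+δ)/(ρr+δ) ). Then δ·b(δ) → ρ·log(λ/(νρ)) as δ → ∞, provided λ > νρ. -/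
/-! Write `A = λ + δ - νρ` and `q = √(A² + 4ρνδ)`, so that `r = -(A + q)/(2ρ)` and
`s = (q - A)/(2ρ)`. Rationalising, `s = 2νδ/(A + q)`, `δ/r = -2ρδ/(A + q)`,
`ρr + δ = -2λδ/(q + δ - λ + νρ)` and `δ/(r - s) = -ρδ/q`; since `q/δ → 1`, these tend to
`ν`, `-ρ`, `-λ` and `-ρ`. Hence the argument of the logarithm in `δ·b(δ)`,
`s · (δ/r) · ((ρs + δ)/δ) / (ρr + δ)`, tends to `νρ/λ`, and
`δ·b(δ) = δ/(r - s) · log(…) → -ρ log(νρ/λ)`. -/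

open Filter Topology

noncomputable def sqrtDisc (ρ lam ν δ : ℝ) : ℝ :=
  √((lam + δ - ν * ρ) ^ 2 + 4 * ρ * ν * δ)

noncomputable def negRoot (ρ lam ν δ : ℝ) : ℝ :=
  (-(lam + δ - ν * ρ) - sqrtDisc ρ lam ν δ) / (2 * ρ)

noncomputable def posRoot (ρ lam ν δ : ℝ) : ℝ :=
  (-(lam + δ - ν * ρ) + sqrtDisc ρ lam ν δ) / (2 * ρ)

theorem negRoot_sub_posRoot (ρ lam ν δ : ℝ) :
    negRoot ρ lam ν δ - posRoot ρ lam ν δ = -sqrtDisc ρ lam ν δ / ρ := by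
  rw [negRoot, posRoot, div_sub_div_same, ← mul_div_mul_left _ ρ two_ne_zero]
  ring_nf

theorem tendsto_sqrtDisc_div (ρ lam ν : ℝ) :
    Tendsto (fun δ => sqrtDisc ρ lam ν δ / δ) atTop (𝓝 1) := by
  have hinv := tendsto_inv_atTop_zero (𝕜 := ℝ)
  have hlim : Tendsto (fun δ : ℝ => √(((lam - ν * ρ) * δ⁻¹ + 1) ^ 2 + 4 * ρ * ν * δ⁻¹))
      atTop (𝓝 √((((lam - ν * ρ) * 0 + 1) ^ 2 + 4 * ρ * ν * 0))) :=
    ((((hinv.const_mul _).add_const 1).pow 2).add (hinv.const_mul _)).sqrt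
  rw [show ((lam - ν * ρ) * 0 + 1) ^ 2 + 4 * ρ * ν * 0 = (1 : ℝ) by ring, Real.sqrt_one] at hlim
  refine hlim.congr' ?_
  filter_upwards [eventually_gt_atTop 0] with δ hδ
  have hsqrt := Real.sqrt_div' ((lam + δ - ν * ρ) ^ 2 + 4 * ρ * ν * δ) (sq_nonneg δ)
  rw [Real.sqrt_sq hδ.le] at hsqrt
  rw [sqrtDisc, ← hsqrt]
  congr 1
  field_simp
  ring

theorem tendsto_add_sqrtDisc_div (ρ lam ν c : ℝ) :
    Tendsto (fun δ => (c + δ + sqrtDisc ρ lam ν δ) / δ) atTop (𝓝 2) := by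
  have hlim :=
    ((tendsto_inv_atTop_zero.const_mul c).add_const 1).add (tendsto_sqrtDisc_div ρ lam ν)
  rw [show c * 0 + 1 + 1 = (2 : ℝ) by ring] at hlim
  refine hlim.congr' ?_
  filter_upwards [eventually_ne_atTop 0] with δ hδ
  field_simp

theorem tendsto_div_negRoot_sub_posRoot (ρ lam ν : ℝ) :
    Tendsto (fun δ => δ / (negRoot ρ lam ν δ - posRoot ρ lam ν δ)) atTop (𝓝 (-ρ)) := by
  have hlim := tendsto_const_nhds (x := -ρ).div (tendsto_sqrtDisc_div ρ lam ν) one_ne_zero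
  rw [div_one] at hlim
  refine hlim.congr' (Eventually.of_forall fun δ => ?_)
  simp only [Pi.div_apply]
  rw [negRoot_sub_posRoot, div_div_eq_mul_div, neg_div, div_neg, div_div_eq_mul_div, neg_mul,
    mul_comm, neg_div]

section QuadraticRoots

variable {ρ lam ν δ : ℝ}

theorem abs_lt_sqrtDisc (hρ : 0 < ρ) (hν : 0 < ν) (hδ : 0 < δ) :
    |lam + δ - ν * ρ| < sqrtDisc ρ lam ν δ :=
  Real.lt_sqrt_of_sq_lt (by rw [sq_abs]; linarith [mul_pos (mul_pos hρ hν) hδ])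

theorem abs_sub_lt_sqrtDisc (hlam : 0 < lam) (hδ : 0 < δ) :
    |δ - lam + ν * ρ| < sqrtDisc ρ lam ν δ :=
  Real.lt_sqrt_of_sq_lt (by rw [sq_abs]; nlinarith [mul_pos hlam hδ])

theorem posRoot_eq (hρ : 0 < ρ) (hν : 0 < ν) (hδ : 0 < δ) :
    posRoot ρ lam ν δ = 2 * ν * δ / (lam + δ - ν * ρ + sqrtDisc ρ lam ν δ) := by
  have hq := abs_lt_sqrtDisc (lam := lam) hρ hν hδ
  have hq2 : sqrtDisc ρ lam ν δ ^ 2 = (lam + δ - ν * ρ) ^ 2 + 4 * ρ * ν * δ :=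
    Real.sq_sqrt (by positivity)
  have hden : 0 < lam + δ - ν * ρ + sqrtDisc ρ lam ν δ := by linarith [neg_abs_le (lam + δ - ν * ρ)]
  rw [posRoot, div_eq_div_iff (by positivity) hden.ne']
  linear_combination hq2

theorem div_negRoot_eq (hρ : 0 < ρ) (hν : 0 < ν) (hδ : 0 < δ) :
    δ / negRoot ρ lam ν δ = -2 * ρ * δ / (lam + δ - ν * ρ + sqrtDisc ρ lam ν δ) := by
  have hq := abs_lt_sqrtDisc (lam := lam) hρ hν hδ
  have hden : 0 < lam + δ - ν * ρ + sqrtDisc ρ lam ν δ := by linarith [neg_abs_le (lam + δ - ν * ρ)]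
  rw [negRoot, div_div_eq_mul_div, div_eq_div_iff (by linarith) hden.ne']
  ring

theorem mul_negRoot_add_eq (hρ : 0 < ρ) (hlam : 0 < lam) (hδ : 0 < δ) :
    ρ * negRoot ρ lam ν δ + δ = -2 * lam * δ / (δ - lam + ν * ρ + sqrtDisc ρ lam ν δ) := by
  have hq := abs_sub_lt_sqrtDisc (ν := ν) (ρ := ρ) hlam hδ
  have hq2 : sqrtDisc ρ lam ν δ ^ 2 = (lam + δ - ν * ρ) ^ 2 + 4 * ρ * ν * δ :=
    Real.sq_sqrt (by nlinarith [mul_pos hlam hδ, sq_nonneg (δ - lam + ν * ρ)])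
  have hden : 0 < δ - lam + ν * ρ + sqrtDisc ρ lam ν δ := by linarith [neg_abs_le (δ - lam + ν * ρ)]
  rw [negRoot, eq_div_iff hden.ne']
  field_simp
  linear_combination -hq2

theorem tendsto_posRoot (hρ : 0 < ρ) (hν : 0 < ν) :
    Tendsto (posRoot ρ lam ν) atTop (𝓝 ν) := by
  have hlim := tendsto_const_nhds (x := 2 * ν).div
    (tendsto_add_sqrtDisc_div ρ lam ν (lam - ν * ρ)) two_ne_zero
  rw [mul_div_cancel_left₀ ν two_ne_zero] at hlim
  refine hlim.congr' ?_
  filter_upwards [eventually_gt_atTop 0] with δ hδ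
  simp only [Pi.div_apply]
  rw [posRoot_eq hρ hν hδ, div_div_eq_mul_div]
  ring_nf

theorem tendsto_div_negRoot (hρ : 0 < ρ) (hν : 0 < ν) :
    Tendsto (fun δ => δ / negRoot ρ lam ν δ) atTop (𝓝 (-ρ)) := by
  have hlim := tendsto_const_nhds (x := -2 * ρ).div
    (tendsto_add_sqrtDisc_div ρ lam ν (lam - ν * ρ)) two_ne_zero
  rw [show -2 * ρ / 2 = -ρ by ring] at hlim
  refine hlim.congr' ?_
  filter_upwards [eventually_gt_atTop 0] with δ hδ
  simp only [Pi.div_apply]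
  rw [div_negRoot_eq hρ hν hδ, div_div_eq_mul_div]
  ring_nf

theorem tendsto_mul_negRoot_add (hρ : 0 < ρ) (hlam : 0 < lam) :
    Tendsto (fun δ => ρ * negRoot ρ lam ν δ + δ) atTop (𝓝 (-lam)) := by
  have hlim := tendsto_const_nhds (x := -2 * lam).div
    (tendsto_add_sqrtDisc_div ρ lam ν (ν * ρ - lam)) two_ne_zero
  rw [show -2 * lam / 2 = -lam by ring] at hlim
  refine hlim.congr' ?_
  filter_upwards [eventually_gt_atTop 0] with δ hδ
  simp only [Pi.div_apply]
  rw [mul_negRoot_add_eq hρ hlam hδ, div_div_eq_mul_div]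
  ring_nf

theorem tendsto_posRoot_div_negRoot_mul_div (hρ : 0 < ρ) (hlam : 0 < lam) (hν : 0 < ν) :
    Tendsto (fun δ => posRoot ρ lam ν δ / negRoot ρ lam ν δ *
      ((ρ * posRoot ρ lam ν δ + δ) / (ρ * negRoot ρ lam ν δ + δ))) atTop (𝓝 (ν * ρ / lam)) := by
  have hs := tendsto_posRoot (lam := lam) hρ hν
  have hsδ : Tendsto (fun δ => ρ * (posRoot ρ lam ν δ * δ⁻¹) + 1) atTop (𝓝 1) := by
    simpa using ((hs.mul tendsto_inv_atTop_zero).const_mul ρ).add_const 1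
  have hlim := ((hs.mul (tendsto_div_negRoot (lam := lam) hρ hν)).mul hsδ).div
    (tendsto_mul_negRoot_add (ν := ν) hρ hlam) (neg_ne_zero.mpr hlam.ne')
  rw [show ν * -ρ * 1 / -lam = ν * ρ / lam by field_simp] at hlim
  refine hlim.congr' ?_
  filter_upwards [eventually_ne_atTop 0] with δ hδ
  simp only [Pi.div_apply, div_eq_mul_inv]
  field_simp

end QuadraticRoots

theorem stmt_9_general (ρ lam ν : ℝ) (hρ : 0 < ρ) (hlam : 0 < lam) (hν : 0 < ν)
    (r s b : ℝ → ℝ)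
    (hr : ∀ δ : ℝ, r δ =
      (-(lam + δ - ν * ρ) - Real.sqrt ((lam + δ - ν * ρ)^2 + 4 * ρ * ν * δ)) / (2 * ρ))
    (hs : ∀ δ : ℝ, s δ =
      (-(lam + δ - ν * ρ) + Real.sqrt ((lam + δ - ν * ρ)^2 + 4 * ρ * ν * δ)) / (2 * ρ))
    (hb : ∀ δ : ℝ, b δ =
      (1 / (r δ - s δ)) * Real.log ((s δ / r δ) * ((ρ * s δ + δ) / (ρ * r δ + δ)))) :
    Tendsto (fun δ => δ * b δ) atTop (𝓝 (ρ * Real.log (lam / (ν * ρ)))) := by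
  obtain rfl : r = negRoot ρ lam ν := funext hr
  obtain rfl : s = posRoot ρ lam ν := funext hs
  have hlim := (tendsto_div_negRoot_sub_posRoot ρ lam ν).mul
    ((Real.continuousAt_log (by positivity)).tendsto.comp
      (tendsto_posRoot_div_negRoot_mul_div hρ hlam hν))
  rw [show -ρ * Real.log (ν * ρ / lam) = ρ * Real.log (lam / (ν * ρ)) by
    rw [← inv_div, Real.log_inv, mul_neg, neg_mul, neg_neg]] at hlim
  refine hlim.congr fun δ => ?_
  rw [Function.comp_apply, hb δ, ← mul_assoc, mul_one_div]

theorem stmt_9 (ρ lam ν : ℝ) (hρ : 0 < ρ) (hlam : 0 < lam) (hν : 0 < ν)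
    (h : ν * ρ < lam)
    (r s b : ℝ → ℝ)
    (hr : ∀ δ : ℝ, r δ =
      (-(lam + δ - ν * ρ) - Real.sqrt ((lam + δ - ν * ρ)^2 + 4 * ρ * ν * δ)) / (2 * ρ))
    (hs : ∀ δ : ℝ, s δ =
      (-(lam + δ - ν * ρ) + Real.sqrt ((lam + δ - ν * ρ)^2 + 4 * ρ * ν * δ)) / (2 * ρ))
    (hb : ∀ δ : ℝ, b δ =
      (1 / (r δ - s δ)) * Real.log ((s δ / r δ) * ((ρ * s δ + δ) / (ρ * r δ + δ)))) :
    Tendsto (fun δ => δ * b δ) atTop (𝓝 (ρ * Real.log (lam / (ν * ρ)))) :=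
  stmt_9_general ρ lam ν hρ hlam hν r s b hr hs hb
end

section
/- Let λ, ν, δ > 0. Let r(ρ), s(ρ) be the roots of ρξ² + (λ+δ-νρ)ξ - νδ = 0 and b(ρ) = (1/(r-s)) log( (s/r)(ρs+δ)/(ρr+δ) ). Then b(ρ)/(ρ · log(1/ρ)) → 1/(λ+δ) as ρ → 0⁺. -/
open Filter Topology

set_option maxHeartbeats 1000000 in
theorem stmt_10 (lam ν δ : ℝ) (hlam : 0 < lam) (hν : 0 < ν) (hδ : 0 < δ)
    (r s b : ℝ → ℝ)
    (hr : ∀ ρ : ℝ, r ρ =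
      (-(lam + δ - ν * ρ) - Real.sqrt ((lam + δ - ν * ρ)^2 + 4 * ρ * ν * δ)) / (2 * ρ))
    (hs : ∀ ρ : ℝ, s ρ =
      (-(lam + δ - ν * ρ) + Real.sqrt ((lam + δ - ν * ρ)^2 + 4 * ρ * ν * δ)) / (2 * ρ))
    (hb : ∀ ρ : ℝ, b ρ =
      (1 / (r ρ - s ρ)) * Real.log ((s ρ / r ρ) * ((ρ * s ρ + δ) / (ρ * r ρ + δ)))) :
    Tendsto (fun ρ => b ρ / (ρ * Real.log (1 / ρ))) (𝓝[>] 0) (𝓝 (1 / (lam + δ))) := by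
  have hL : 0 < lam + δ := by linarith
  -- limit of the square root term
  have hDten : Tendsto (fun ρ : ℝ => Real.sqrt ((lam + δ - ν * ρ)^2 + 4 * ρ * ν * δ))
      (𝓝[>] (0:ℝ)) (𝓝 (lam + δ)) := by
    have hc : Continuous (fun ρ : ℝ => Real.sqrt ((lam + δ - ν * ρ)^2 + 4 * ρ * ν * δ)) := by
      continuity
    have h0 := hc.tendsto 0
    have he : Real.sqrt ((lam + δ - ν * 0)^2 + 4 * 0 * ν * δ) = lam + δ := by
      simp [Real.sqrt_sq hL.le]
    rw [he] at h0
    exact h0.mono_left nhdsWithin_le_nhds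
  have hρpos : ∀ᶠ ρ in 𝓝[>] (0:ℝ), 0 < ρ := eventually_mem_nhdsWithin
  have hAten : Tendsto (fun ρ : ℝ => lam + δ - ν * ρ) (𝓝[>] (0:ℝ)) (𝓝 (lam + δ)) := by
    have hc : Continuous (fun ρ : ℝ => lam + δ - ν * ρ) := by continuity
    have h0 := hc.tendsto 0
    have he : lam + δ - ν * 0 = lam + δ := by ring
    rw [he] at h0
    exact h0.mono_left nhdsWithin_le_nhds
  have hApos : ∀ᶠ ρ in 𝓝[>] (0:ℝ), 0 < lam + δ - ν * ρ := hAten.eventually (eventually_gt_nhds hL)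
  -- eventual formula for s
  have hsEq : s =ᶠ[𝓝[>] (0:ℝ)] fun ρ =>
      2 * ν * δ / ((lam + δ - ν * ρ) + Real.sqrt ((lam + δ - ν * ρ)^2 + 4 * ρ * ν * δ)) := by
    filter_upwards [hρpos, hApos] with ρ hρ hA0
    have hDnn : 0 ≤ Real.sqrt ((lam + δ - ν * ρ)^2 + 4 * ρ * ν * δ) := Real.sqrt_nonneg _
    have hDsq : (Real.sqrt ((lam + δ - ν * ρ)^2 + 4 * ρ * ν * δ))^2
        = (lam + δ - ν * ρ)^2 + 4 * ρ * ν * δ :=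
      Real.sq_sqrt (by nlinarith [sq_nonneg (lam + δ - ν * ρ), mul_pos (mul_pos hρ hν) hδ])
    have hADpos : 0 < (lam + δ - ν * ρ) + Real.sqrt ((lam + δ - ν * ρ)^2 + 4 * ρ * ν * δ) := by
      linarith
    rw [hs ρ, div_eq_div_iff (mul_pos two_pos hρ).ne' hADpos.ne']
    linear_combination hDsq
  -- eventual formula for ρ * r ρ
  have hrEq : (fun ρ => ρ * r ρ) =ᶠ[𝓝[>] (0:ℝ)] fun ρ =>
      (-(lam + δ - ν * ρ) - Real.sqrt ((lam + δ - ν * ρ)^2 + 4 * ρ * ν * δ)) / 2 := by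
    filter_upwards [hρpos] with ρ hρ
    rw [hr ρ]
    field_simp
  -- limit of s
  have hSten : Tendsto s (𝓝[>] (0:ℝ)) (𝓝 (ν * δ / (lam + δ))) := by
    have h1 : Tendsto (fun ρ : ℝ => 2 * ν * δ /
        ((lam + δ - ν * ρ) + Real.sqrt ((lam + δ - ν * ρ)^2 + 4 * ρ * ν * δ)))
        (𝓝[>] (0:ℝ)) (𝓝 (2 * ν * δ / ((lam + δ) + (lam + δ)))) :=
      tendsto_const_nhds.div (hAten.add hDten) (by positivity)
    have he : 2 * ν * δ / ((lam + δ) + (lam + δ)) = ν * δ / (lam + δ) := by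
      field_simp
      ring
    rw [he] at h1
    exact h1.congr' hsEq.symm
  -- limit of ρ * r ρ
  have hRten : Tendsto (fun ρ => ρ * r ρ) (𝓝[>] (0:ℝ)) (𝓝 (-(lam + δ))) := by
    have h1 : Tendsto (fun ρ : ℝ =>
        (-(lam + δ - ν * ρ) - Real.sqrt ((lam + δ - ν * ρ)^2 + 4 * ρ * ν * δ)) / 2)
        (𝓝[>] (0:ℝ)) (𝓝 ((-(lam + δ) - (lam + δ)) / 2)) :=
      ((hAten.neg.sub hDten)).div_const 2
    have he : (-(lam + δ) - (lam + δ)) / 2 = -(lam + δ) := by ring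
    rw [he] at h1
    exact h1.congr' hrEq.symm
  -- limit of ρ * s ρ
  have hidten : Tendsto (fun ρ : ℝ => ρ) (𝓝[>] (0:ℝ)) (𝓝 0) :=
    tendsto_id.mono_right nhdsWithin_le_nhds
  have hρSten : Tendsto (fun ρ => ρ * s ρ) (𝓝[>] (0:ℝ)) (𝓝 0) := by
    have := hidten.mul hSten
    simpa using this
  -- the function C and the constant C₀
  set C : ℝ → ℝ := fun ρ => (s ρ * (ρ * s ρ + δ)) / ((ρ * r ρ) * (ρ * r ρ + δ)) with hCdef
  set C₀ : ℝ := (ν * δ / (lam + δ) * (0 + δ)) / ((-(lam + δ)) * (-(lam + δ) + δ)) with hC₀def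
  have hden : (-(lam + δ)) * (-(lam + δ) + δ) = (lam + δ) * lam := by ring
  have hC₀pos : 0 < C₀ := by
    rw [hC₀def, hden]
    positivity
  have hCten : Tendsto C (𝓝[>] (0:ℝ)) (𝓝 C₀) := by
    apply Tendsto.div (hSten.mul (hρSten.add tendsto_const_nhds))
      (hRten.mul (hRten.add tendsto_const_nhds))
    rw [hden]
    positivity
  have hlogCten : Tendsto (fun ρ => Real.log (C ρ)) (𝓝[>] (0:ℝ)) (𝓝 (Real.log C₀)) :=
    ((Real.continuousAt_log hC₀pos.ne').tendsto).comp hCten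
  -- (log ρ)⁻¹ → 0
  have hloginv : Tendsto (fun ρ : ℝ => (Real.log ρ)⁻¹) (𝓝[>] (0:ℝ)) (𝓝 0) := by
    have h1 : Tendsto (fun ρ : ℝ => -Real.log ρ) (𝓝[>] (0:ℝ)) atTop :=
      tendsto_neg_atBot_atTop.comp Real.tendsto_log_nhdsGT_zero
    have h2 := h1.inv_tendsto_atTop
    have h3 : Tendsto (fun ρ : ℝ => -(-Real.log ρ)⁻¹) (𝓝[>] (0:ℝ)) (𝓝 (-0)) := h2.neg
    simp only [inv_neg, neg_neg, neg_zero] at h3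
    exact h3
  -- the nice function and its limit
  have hFten : Tendsto (fun ρ =>
      (Real.sqrt ((lam + δ - ν * ρ)^2 + 4 * ρ * ν * δ))⁻¹ * (1 + Real.log (C ρ) * (Real.log ρ)⁻¹))
      (𝓝[>] (0:ℝ)) (𝓝 ((lam + δ)⁻¹ * (1 + Real.log C₀ * 0))) :=
    (hDten.inv₀ hL.ne').mul (tendsto_const_nhds.add (hlogCten.mul hloginv))
  have hval : (lam + δ)⁻¹ * (1 + Real.log C₀ * 0) = 1 / (lam + δ) := by ring
  rw [hval] at hFten
  -- eventual equality with the target function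
  refine hFten.congr' ?_
  have hρlt1 : ∀ᶠ ρ in 𝓝[>] (0:ℝ), ρ < 1 :=
    (gt_mem_nhds (by norm_num : (0:ℝ) < 1)).filter_mono nhdsWithin_le_nhds
  have hDpos : ∀ᶠ ρ in 𝓝[>] (0:ℝ),
      0 < Real.sqrt ((lam + δ - ν * ρ)^2 + 4 * ρ * ν * δ) :=
    hDten.eventually (eventually_gt_nhds hL)
  have hsne : ∀ᶠ ρ in 𝓝[>] (0:ℝ), s ρ ≠ 0 :=
    hSten.eventually_ne (by positivity)
  have hρsδ : ∀ᶠ ρ in 𝓝[>] (0:ℝ), ρ * s ρ + δ ≠ 0 :=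
    (hρSten.add (tendsto_const_nhds : Tendsto (fun _ : ℝ => δ) _ _)).eventually_ne
      (by simpa using hδ.ne')
  have hρrne : ∀ᶠ ρ in 𝓝[>] (0:ℝ), ρ * r ρ ≠ 0 :=
    hRten.eventually_ne (ne_of_lt (by linarith : -(lam + δ) < 0))
  have hρrδ : ∀ᶠ ρ in 𝓝[>] (0:ℝ), ρ * r ρ + δ ≠ 0 :=
    (hRten.add (tendsto_const_nhds : Tendsto (fun _ : ℝ => δ) _ _)).eventually_ne
      (ne_of_lt (by linarith : -(lam + δ) + δ < 0))
  filter_upwards [hρpos, hρlt1, hDpos, hsne, hρsδ, hρrne, hρrδ] with ρ hρ h1 hD hs0 hsδ0 hr0 hrδ0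
  have hlogρ : Real.log ρ < 0 := Real.log_neg hρ h1
  have hrne : r ρ ≠ 0 := fun h => hr0 (by rw [h, mul_zero])
  have hCne : C ρ ≠ 0 := by
    simp only [hCdef]
    exact div_ne_zero (mul_ne_zero hs0 hsδ0) (mul_ne_zero hr0 hrδ0)
  have harg : s ρ / r ρ * ((ρ * s ρ + δ) / (ρ * r ρ + δ)) = ρ * C ρ := by
    simp only [hCdef]
    field_simp
  have hrs : r ρ - s ρ = -(Real.sqrt ((lam + δ - ν * ρ)^2 + 4 * ρ * ν * δ)) / ρ := by
    rw [hr ρ, hs ρ]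
    field_simp
    ring
  have key : ∀ d c l : ℝ, 0 < d → l < 0 →
      d⁻¹ * (1 + c * l⁻¹) = 1 / (-d / ρ) * (l + c) / (ρ * -l) := by
    intro d c l hd hl
    have hl' : l ≠ 0 := hl.ne
    field_simp [hd.ne', hρ.ne']
  show _ = b ρ / (ρ * Real.log (1 / ρ))
  rw [hb ρ, harg, hrs, Real.log_mul hρ.ne' hCne, one_div ρ, Real.log_inv]
  exact key _ _ _ hD hlogρ
end

section
/- Let ρ, λ > 0 with λm > ρ, where m = ∫₀^∞ y p(y) dy for a probability density p on (0,∞) that is not concentrated at 0. Then the function H(α) = ρα + λ∫₀^∞(e^{-αy} - 1)p(y) dy has a unique root α > 0, besides the trivial root α = 0. -/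
/-!
`H` is strictly convex on `[0, ∞)` with `H 0 = 0`, because `α ↦ exp (-α y)` is strictly convex
for `y > 0` and `p` is not a.e. zero; hence `H` has at most one positive zero. Near `0`,
`H α / α → ρ - λ m < 0`, while `H α ≥ ρ α - λ ∫ p → ∞`. Being convex, `H` is continuous on
`(0, ∞)`, and the intermediate value theorem provides the zero.
-/

open MeasureTheory Set Filter Topology

lemma abs_exp_neg_sub_one_le_one {x : ℝ} (hx : 0 ≤ x) : |Real.exp (-x) - 1| ≤ 1 := by
  rw [abs_sub_comm, abs_of_nonneg (by simpa using Real.exp_le_one_iff.2 (neg_nonpos.2 hx))]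
  linarith [Real.exp_pos (-x)]

lemma abs_exp_neg_sub_one_le {x : ℝ} (hx : 0 ≤ x) : |Real.exp (-x) - 1| ≤ x := by
  rw [abs_sub_comm, abs_of_nonneg (by simpa using Real.exp_le_one_iff.2 (neg_nonpos.2 hx))]
  linarith [Real.one_sub_le_exp_neg x]

lemma integral_mul_pos_of_ae_pos {α : Type*} [MeasurableSpace α] {μ : Measure α} {f g : α → ℝ}
    (hf : ∀ᵐ x ∂μ, 0 < f x) (hg : 0 ≤ᵐ[μ] g) (hg0 : ¬ g =ᵐ[μ] 0)
    (hfg : Integrable (fun x => f x * g x) μ) : 0 < ∫ x, f x * g x ∂μ := by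
  have hfg_nonneg : 0 ≤ᵐ[μ] fun x => f x * g x := by
    filter_upwards [hf, hg] with x hfx hgx using mul_nonneg hfx.le hgx
  refine (integral_nonneg_of_ae hfg_nonneg).lt_of_ne fun h => hg0 ?_
  filter_upwards [(integral_eq_zero_iff_of_nonneg_ae hfg_nonneg hfg).1 h.symm, hf] with x hx hfx
  exact (mul_eq_zero.1 hx).resolve_left hfx.ne'

noncomputable def lundbergIntegral (μ : Measure ℝ) (p : ℝ → ℝ) (α : ℝ) : ℝ :=
  ∫ y, (Real.exp (-α * y) - 1) * p y ∂μ

/-- The paper's `H`, with Lebesgue measure on `(0, ∞)` generalised to a measure `μ`. -/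
noncomputable def lundbergFun (μ : Measure ℝ) (ρ lam : ℝ) (p : ℝ → ℝ) (α : ℝ) : ℝ :=
  ρ * α + lam * lundbergIntegral μ p α

section
variable {μ : Measure ℝ} {p : ℝ → ℝ} {ρ lam : ℝ}

lemma integrable_lundbergIntegrand (hpos : ∀ᵐ y ∂μ, 0 < y) (hint : Integrable p μ) {α : ℝ}
    (hα : 0 ≤ α) : Integrable (fun y => (Real.exp (-α * y) - 1) * p y) μ := by
  refine hint.bdd_mul (c := 1) (by fun_prop) ?_
  filter_upwards [hpos] with y hy
  rw [Real.norm_eq_abs, neg_mul]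
  exact abs_exp_neg_sub_one_le_one (mul_nonneg hα hy.le)

lemma neg_integral_le_lundbergIntegral (hpos : ∀ᵐ y ∂μ, 0 < y) (hp : 0 ≤ᵐ[μ] p)
    (hint : Integrable p μ) {α : ℝ} (hα : 0 ≤ α) : -∫ y, p y ∂μ ≤ lundbergIntegral μ p α := by
  rw [← integral_neg]
  refine integral_mono_ae hint.neg (integrable_lundbergIntegrand hpos hint hα) ?_
  filter_upwards [hp] with y (hy : 0 ≤ p y)
  show -p y ≤ (Real.exp (-α * y) - 1) * p y
  nlinarith [Real.exp_pos (-α * y)]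

lemma strictConvexOn_lundbergIntegral (hpos : ∀ᵐ y ∂μ, 0 < y) (hp : 0 ≤ᵐ[μ] p)
    (hint : Integrable p μ) (hnz : ¬ p =ᵐ[μ] 0) :
    StrictConvexOn ℝ (Ici 0) (lundbergIntegral μ p) := by
  refine ⟨convex_Ici 0, fun a ha b hb hab t s ht hs hts => ?_⟩
  have hc : 0 ≤ t * a + s * b := add_nonneg (mul_nonneg ht.le ha) (mul_nonneg hs.le hb)
  have hF := fun {α : ℝ} (hα : 0 ≤ α) => integrable_lundbergIntegrand hpos hint hα
  have hsplit : (fun y => (t * Real.exp (-a * y) + s * Real.exp (-b * y)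
      - Real.exp (-(t * a + s * b) * y)) * p y) = fun y =>
      t * ((Real.exp (-a * y) - 1) * p y) + s * ((Real.exp (-b * y) - 1) * p y)
        - (Real.exp (-(t * a + s * b) * y) - 1) * p y := by
    funext y; linear_combination p y * hts
  have hFa := (hF ha).const_mul t
  have hFb := (hF hb).const_mul s
  have hgap : 0 < ∫ y, (t * Real.exp (-a * y) + s * Real.exp (-b * y)
      - Real.exp (-(t * a + s * b) * y)) * p y ∂μ := by
    refine integral_mul_pos_of_ae_pos ?_ hp hnz ?_
    · filter_upwards [hpos] with y hy
      have := strictConvexOn_exp.2 (mem_univ (-a * y)) (mem_univ (-b * y))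
        (by simpa [hy.ne'] using hab) ht hs hts
      rw [smul_eq_mul, smul_eq_mul, smul_eq_mul, smul_eq_mul] at this
      rw [show -(t * a + s * b) * y = t * (-a * y) + s * (-b * y) by ring]
      linarith
    · rw [hsplit]; exact (hFa.add hFb).sub (hF hc)
  rw [hsplit, integral_sub (hFa.fun_add hFb) (hF hc), integral_add hFa hFb, integral_const_mul,
    integral_const_mul] at hgap
  simp only [smul_eq_mul, lundbergIntegral]
  linarith

lemma tendsto_lundbergIntegral_div (hpos : ∀ᵐ y ∂μ, 0 < y) (hmeas : AEStronglyMeasurable p μ)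
    (hmom : Integrable (fun y => y * p y) μ) :
    Tendsto (fun α => lundbergIntegral μ p α / α) (𝓝[>] 0) (𝓝 (-∫ y, y * p y ∂μ)) := by
  have hslope (y : ℝ) : Tendsto (fun α => (Real.exp (-α * y) - 1) / α) (𝓝[>] 0) (𝓝 (-y)) := by
    have hd : HasDerivAt (fun α => Real.exp (-α * y)) (-y) 0 := by
      simpa using ((hasDerivAt_neg 0).mul_const y).exp
    refine hd.tendsto_slope_zero_right.congr fun α => ?_
    simp [div_eq_inv_mul]
  simp only [lundbergIntegral, ← integral_div, ← integral_neg]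
  refine tendsto_integral_filter_of_dominated_convergence (fun y => ‖y * p y‖)
    (Eventually.of_forall fun α => by fun_prop) ?_ hmom.norm ?_
  · filter_upwards [self_mem_nhdsWithin] with α (hα : 0 < α)
    filter_upwards [hpos] with y hy
    rw [norm_div, norm_mul, norm_mul, Real.norm_of_nonneg hα.le, Real.norm_of_nonneg hy.le,
      div_le_iff₀ hα, Real.norm_eq_abs, neg_mul]
    calc |Real.exp (-(α * y)) - 1| * ‖p y‖ ≤ (α * y) * ‖p y‖ :=
          mul_le_mul_of_nonneg_right (abs_exp_neg_sub_one_le (by positivity)) (norm_nonneg _)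
      _ = y * ‖p y‖ * α := by ring
  · refine Eventually.of_forall fun y => ?_
    simpa [div_mul_eq_mul_div] using (hslope y).mul_const (p y)

lemma lundbergFun_zero : lundbergFun μ ρ lam p 0 = 0 := by
  simp [lundbergFun, lundbergIntegral]

lemma strictConvexOn_lundbergFun (hlam : 0 < lam) (hpos : ∀ᵐ y ∂μ, 0 < y) (hp : 0 ≤ᵐ[μ] p)
    (hint : Integrable p μ) (hnz : ¬ p =ᵐ[μ] 0) :
    StrictConvexOn ℝ (Ici 0) (lundbergFun μ ρ lam p) := by
  refine ⟨convex_Ici 0, fun a ha b hb hab t s ht hs hts => ?_⟩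
  have hI := (strictConvexOn_lundbergIntegral hpos hp hint hnz).2 ha hb hab ht hs hts
  simp only [lundbergFun, smul_eq_mul] at hI ⊢
  nlinarith [mul_lt_mul_of_pos_left hI hlam]

lemma exists_lundbergFun_neg (hpos : ∀ᵐ y ∂μ, 0 < y) (hmeas : AEStronglyMeasurable p μ)
    (hmom : Integrable (fun y => y * p y) μ) (hmean : ρ < lam * ∫ y, y * p y ∂μ) :
    ∃ α > 0, lundbergFun μ ρ lam p α < 0 := by
  have hslope : Tendsto (fun α => lundbergFun μ ρ lam p α / α) (𝓝[>] 0)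
      (𝓝 (ρ + lam * -∫ y, y * p y ∂μ)) := by
    refine ((tendsto_lundbergIntegral_div hpos hmeas hmom).const_mul lam).const_add ρ |>.congr' ?_
    filter_upwards [self_mem_nhdsWithin] with α (hα : 0 < α)
    rw [lundbergFun]
    field_simp
  obtain ⟨α, hα, hα_pos⟩ := ((hslope.eventually (eventually_lt_nhds
    (by linarith : ρ + lam * -∫ y, y * p y ∂μ < 0))).and
    self_mem_nhdsWithin).exists
  exact ⟨α, hα_pos, neg_of_div_neg_left hα hα_pos.le⟩

lemma tendsto_lundbergFun_atTop (hρ : 0 < ρ) (hlam : 0 ≤ lam) (hpos : ∀ᵐ y ∂μ, 0 < y)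
    (hp : 0 ≤ᵐ[μ] p) (hint : Integrable p μ) :
    Tendsto (lundbergFun μ ρ lam p) atTop atTop := by
  refine tendsto_atTop_mono' _ ?_
    (tendsto_atTop_add_const_right _ (lam * -∫ y, p y ∂μ) (tendsto_id.const_mul_atTop hρ))
  filter_upwards [eventually_ge_atTop 0] with α hα
  simp only [lundbergFun, id]
  gcongr
  exact neg_integral_le_lundbergIntegral hpos hp hint hα

end

lemma StrictConvexOn.eq_of_apply_eq_of_lt {𝕜 : Type*} [Field 𝕜] [LinearOrder 𝕜]
    [IsStrictOrderedRing 𝕜] {s : Set 𝕜} {f : 𝕜 → 𝕜} (hf : StrictConvexOn 𝕜 s f) {x a b : 𝕜}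
    (hx : x ∈ s) (ha : a ∈ s) (hb : b ∈ s) (hxa : x < a) (hxb : x < b) (hfa : f a = f x)
    (hfb : f b = f x) : a = b := by
  by_contra hab
  rcases lt_or_gt_of_ne hab with h | h
  · simpa [hfa, hfb] using hf.secant_strict_mono hx ha hb hxa.ne' hxb.ne' h
  · simpa [hfa, hfb] using hf.secant_strict_mono hx hb ha hxb.ne' hxa.ne' h

theorem stmt_13_general (ρ lam : ℝ) (hρ : 0 < ρ) (hlam : 0 < lam)
    (p : ℝ → ℝ) (hp : ∀ y ∈ Ioi (0:ℝ), 0 ≤ p y)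
    (hint : IntegrableOn p (Ioi 0))
    (hmom : IntegrableOn (fun y => y * p y) (Ioi 0))
    (hnz : ¬ (∀ᵐ y ∂(volume.restrict (Ioi (0:ℝ))), p y = 0))
    (hmean : ρ < lam * ∫ y in Ioi (0:ℝ), y * p y) :
    ∃! α : ℝ, 0 < α ∧
      ρ * α + lam * (∫ y in Ioi (0:ℝ), (Real.exp (-α * y) - 1) * p y) = 0 := by
  have hpos : ∀ᵐ y ∂(volume.restrict (Ioi (0:ℝ))), 0 < y := ae_restrict_mem measurableSet_Ioi
  have hp' : 0 ≤ᵐ[volume.restrict (Ioi 0)] p := ae_restrict_of_forall_mem measurableSet_Ioi hp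
  set H := lundbergFun (volume.restrict (Ioi 0)) ρ lam p
  have hconv : StrictConvexOn ℝ (Ici 0) H := strictConvexOn_lundbergFun hlam hpos hp' hint hnz
  obtain ⟨α₀, hα₀, hH₀⟩ := exists_lundbergFun_neg hpos hint.aestronglyMeasurable hmom hmean
  have hH_top := tendsto_lundbergFun_atTop hρ hlam.le hpos hp' hint
  obtain ⟨α₁, hH₁, hα₀₁⟩ := (hH_top.eventually_gt_atTop 0 |>.and (eventually_ge_atTop α₀)).exists
  have hcont : ContinuousOn H (Icc α₀ α₁) := by
    refine hconv.convexOn.continuousOn_interior.mono ?_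
    rw [interior_Ici]
    exact fun α hα => hα₀.trans_le hα.1
  obtain ⟨c, hc, hHc⟩ := intermediate_value_Icc hα₀₁ hcont ⟨hH₀.le, hH₁.le⟩
  have hc_pos : 0 < c := hα₀.trans_le hc.1
  refine ⟨c, ⟨hc_pos, hHc⟩, fun b ⟨hb, hHb⟩ => ?_⟩
  exact hconv.eq_of_apply_eq_of_lt self_mem_Ici hb.le hc_pos.le hb hc_pos
    (hHb.trans lundbergFun_zero.symm) (hHc.trans lundbergFun_zero.symm)

theorem stmt_13 (ρ lam : ℝ) (hρ : 0 < ρ) (hlam : 0 < lam)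
    (p : ℝ → ℝ) (hp : ∀ y ∈ Ioi (0:ℝ), 0 ≤ p y)
    (hint : IntegrableOn p (Ioi 0))
    (hprob : ∫ y in Ioi (0:ℝ), p y = 1)
    (hmom : IntegrableOn (fun y => y * p y) (Ioi 0))
    (hnz : ¬ (∀ᵐ y ∂(volume.restrict (Ioi (0:ℝ))), p y = 0))
    (hmean : ρ < lam * ∫ y in Ioi (0:ℝ), y * p y) :
    ∃! α : ℝ, 0 < α ∧
      ρ * α + lam * (∫ y in Ioi (0:ℝ), (Real.exp (-α * y) - 1) * p y) = 0 :=
  stmt_13_general ρ lam hρ hlam p hp hint hmom hnz hmean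
end
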